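/- arXiv:2108.12986 — 3 statements merged into one kernel-verified Lean document; each statement's English description precedes it below -/
import Mathlib

section
/- Let X be a one-sided shift space over a finite alphabet A. If the hom tree-shift T_X is a tree-shift of finite type, then X is a shift of finite type. -/
namespace TreeShiftPaper

/-- Words over the alphabet `Σ = {0, …, k-1}`: nodes of the `k`-tree. -/
abbrev Word (k : ℕ) := List (Fin k)

variable {k : ℕ} {A : Type*}

/-- A set of words is prefix-closed if it contains every prefix of each of its elements. -/
def PrefixClosed (S : Set (Word k)) : Prop :=
  ∀ w ∈ S, ∀ v : Word k, v <+: w → v ∈ S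

/-- The pattern with support `S` and labels `u` appears in the labeled tree `t`. -/
def PatternAppears (t : Word k → A) (S : Set (Word k)) (u : Word k → A) : Prop :=
  ∃ s : Word k, ∀ w ∈ S, t (s ++ w) = u w

/-- The set of labeled trees avoiding every pattern of the forbidden family `F`. -/
def treeShiftOf (F : Set ((Set (Word k)) × (Word k → A))) : Set (Word k → A) :=
  {t | ∀ p ∈ F, ¬ PatternAppears t p.1 p.2}

/-- `T` is a tree-shift: it is defined by some forbidden set of patterns
(each with finite prefix-closed support). -/
def IsTreeShift (T : Set (Word k → A)) : Prop :=
  ∃ F : Set ((Set (Word k)) × (Word k → A)),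
    (∀ p ∈ F, p.1.Finite ∧ PrefixClosed p.1) ∧ T = treeShiftOf F

/-- `T` is a tree-shift of finite type: the forbidden set can be chosen finite. -/
def IsTreeSFT (T : Set (Word k → A)) : Prop :=
  ∃ F : Set ((Set (Word k)) × (Word k → A)),
    F.Finite ∧ (∀ p ∈ F, p.1.Finite ∧ PrefixClosed p.1) ∧ T = treeShiftOf F

/-- The finite word `w` occurs in the one-sided sequence `x` at position `i`. -/
def OccursAt (x : ℕ → A) (i : ℕ) (w : List A) : Prop :=
  ∀ j : Fin w.length, x (i + (j : ℕ)) = w.get j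

/-- The one-sided shift space defined by the forbidden set of words `F`. -/
def shiftOf (F : Set (List A)) : Set (ℕ → A) :=
  {x | ∀ w ∈ F, ∀ i : ℕ, ¬ OccursAt x i w}

/-- `X` is a one-sided shift space. -/
def IsShift (X : Set (ℕ → A)) : Prop := ∃ F : Set (List A), X = shiftOf F

/-- `X` is a one-sided shift of finite type. -/
def IsSFT (X : Set (ℕ → A)) : Prop :=
  ∃ F : Set (List A), F.Finite ∧ X = shiftOf F

/-- A chain: an infinite path in the tree starting at the root. -/
def IsChain (c : ℕ → Word k) : Prop :=
  c 0 = [] ∧ ∀ n : ℕ, ∃ i : Fin k, c (n + 1) = c n ++ [i]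

/-- The hom tree-shift associated with a one-sided shift space `X`: labeled trees whose
projection along every chain lies in `X`. -/
def homTree (k : ℕ) (X : Set (ℕ → A)) : Set (Word k → A) :=
  {t | ∀ c : ℕ → Word k, IsChain c → (fun n => t (c n)) ∈ X}

/-- `Y` is a sofic one-sided shift: image of an SFT under a sliding block code induced
by an `n`-block map. -/
def IsSofic (Y : Set (ℕ → A)) : Prop :=
  ∃ (B : Type) (_ : Fintype B) (X : Set (ℕ → B)) (n : ℕ) (f : (ℕ → B) → A),
    IsSFT X ∧ (∀ u v : ℕ → B, (∀ j < n, u j = v j) → f u = f v) ∧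
    (fun x : ℕ → B => fun i => f (fun j => x (i + j))) '' X = Y

/-- `T` is a sofic tree-shift: image of a tree-SFT under the map induced by an
`n`-block map. -/
def IsSoficTree (T : Set (Word k → A)) : Prop :=
  ∃ (B : Type) (_ : Fintype B) (T' : Set (Word k → B)) (n : ℕ) (g : (Word k → B) → A),
    IsTreeSFT T' ∧
    (∀ u v : Word k → B, (∀ w : Word k, w.length ≤ n → u w = v w) → g u = g v) ∧
    (fun t : Word k → B => fun w => g (fun z => t (w ++ z))) '' T' = T

/-- The Markov tree-shift determined by `k` binary `d × d` transition matrices. -/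
def markovTree (k d : ℕ) (M : Fin k → Matrix (Fin d) (Fin d) Bool) :
    Set (Word k → Fin d) :=
  {t | ∀ w : Word k, ∀ i : Fin k, M i (t w) (t (w ++ [i])) = true}

/-- The one-sided Markov (vertex) shift determined by a binary `d × d` matrix. -/
def markovShift (d : ℕ) (M : Matrix (Fin d) (Fin d) Bool) : Set (ℕ → Fin d) :=
  {x | ∀ i : ℕ, M (x i) (x (i + 1)) = true}

/-- The pattern with support `S` and labels `u` is admissible in `T`. -/
def AdmissiblePattern (T : Set (Word k → A)) (S : Set (Word k)) (u : Word k → A) : Prop :=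
  ∃ t ∈ T, ∃ s : Word k, ∀ w ∈ S, t (s ++ w) = u w

/-- The `n`-block `u` (a labeling of `Δ_n`) is admissible in `T`. -/
def AdmissibleBlock (T : Set (Word k → A)) (n : ℕ) (u : Word k → A) : Prop :=
  ∃ t ∈ T, ∃ s : Word k, ∀ w : Word k, w.length ≤ n → t (s ++ w) = u w

/-- Word distance on the `k`-tree:
`d(x,y) = |x| + |y| - 2 · max{|w| : w` a common prefix of `x` and `y}`. -/
noncomputable def wordDist (x y : Word k) : ℕ :=
  x.length + y.length - 2 * sSup {m : ℕ | ∃ w : Word k, w <+: x ∧ w <+: y ∧ w.length = m}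

/-- The boundary `∂S = {w ∈ S : wΣ ∩ S = ∅}` of a support `S`. -/
def boundary (S : Set (Word k)) : Set (Word k) :=
  {w | w ∈ S ∧ ∀ i : Fin k, w ++ [i] ∉ S}

/-- A complete prefix code: a finite prefix set such that every word of length at least
`max_{z ∈ P} |z|` has a prefix in `P`. -/
def IsCPC (P : Set (Word k)) : Prop :=
  P.Finite ∧ (∀ x ∈ P, ∀ y ∈ P, x <+: y → x = y) ∧
  ∀ w : Word k, (∀ z ∈ P, z.length ≤ w.length) → ∃ x ∈ P, x <+: w

/-- Strong irreducibility with gap `N`. -/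
def SIGap (T : Set (Word k → A)) (N : ℕ) : Prop :=
  ∀ (Su Sv : Set (Word k)) (u v : Word k → A),
    Su.Finite → PrefixClosed Su → Sv.Finite → PrefixClosed Sv →
    AdmissiblePattern T Su u → AdmissiblePattern T Sv v →
    ∀ w : Word k, (∀ h ∈ Su, N ≤ wordDist w h) →
      ∃ t ∈ T, (∀ z ∈ Su, t z = u z) ∧ ∀ z ∈ Sv, t (w ++ z) = v z

/-- `T` is strongly irreducible (SI). -/
def SI (T : Set (Word k → A)) : Prop := ∃ N : ℕ, SIGap T N

/-- `T` is block gluing (BG). -/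
def BG (T : Set (Word k → A)) : Prop :=
  ∃ N : ℕ, ∀ (n m : ℕ) (u v : Word k → A),
    AdmissibleBlock T n u → AdmissibleBlock T m v →
    ∀ w : Word k, N + n ≤ w.length →
      ∃ t ∈ T, (∀ z : Word k, z.length ≤ n → t z = u z) ∧
        ∀ z : Word k, z.length ≤ m → t (w ++ z) = v z

/-- `T` is topologically mixing (TM). -/
def TM (T : Set (Word k → A)) : Prop :=
  ∀ H₁ H₂ : Set (Word k), H₁.Finite → H₂.Finite →
    ∃ N : ℕ, ∀ t₁ ∈ T, ∀ t₂ ∈ T, ∀ w : Word k, (∀ h ∈ H₁, N ≤ wordDist w h) →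
      ∃ t ∈ T, (∀ z ∈ H₁, t z = t₁ z) ∧ ∀ z ∈ H₂, t (w ++ z) = t₂ z

/-- `T` is irreducible (IR). -/
def IR (T : Set (Word k → A)) : Prop :=
  ∀ (n m : ℕ) (u v : Word k → A),
    AdmissibleBlock T n u → AdmissibleBlock T m v →
    ∃ w : Word k, n < w.length ∧
      ∃ t ∈ T, (∀ z : Word k, z.length ≤ n → t z = u z) ∧
        ∀ z : Word k, z.length ≤ m → t (w ++ z) = v z

/-- `T` is CPC-strongly irreducible via the prefix set `P`. -/
def CPCSIWith (T : Set (Word k → A)) (P : Set (Word k)) : Prop :=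
  ∀ (Su Sv : Set (Word k)) (u v : Word k → A),
    Su.Finite → PrefixClosed Su → Sv.Finite → PrefixClosed Sv →
    AdmissiblePattern T Su u → AdmissiblePattern T Sv v →
    ∃ t ∈ T, (∀ z ∈ Su, t z = u z) ∧
      ∀ w ∈ boundary Su, ∀ z ∈ P, ∀ y ∈ Sv, t (w ++ z ++ y) = v y

/-- `T` is CPC-strongly irreducible (CPC SI). -/
def CPCSI (T : Set (Word k → A)) : Prop := ∃ P : Set (Word k), IsCPC P ∧ CPCSIWith T P

/-- `T` is uniform CPC-strongly irreducible (CPC USI): CPC SI with `P = Σ^N`. -/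
def CPCUSI (T : Set (Word k → A)) : Prop :=
  ∃ N : ℕ, CPCSIWith T {z : Word k | z.length = N}

/-- `T` is CPC-block gluing via the prefix set `P`. -/
def CPCBGWith (T : Set (Word k → A)) (P : Set (Word k)) : Prop :=
  ∀ (n m : ℕ) (u v : Word k → A),
    AdmissibleBlock T n u → AdmissibleBlock T m v →
    ∃ t ∈ T, (∀ z : Word k, z.length ≤ n → t z = u z) ∧
      ∀ w : Word k, w.length = n → ∀ z ∈ P, ∀ y : Word k, y.length ≤ m →
        t (w ++ z ++ y) = v y

/-- `T` is CPC-block gluing (CPC BG). -/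
def CPCBG (T : Set (Word k → A)) : Prop := ∃ P : Set (Word k), IsCPC P ∧ CPCBGWith T P

/-- `T` is uniform CPC-block gluing (CPC UBG): CPC BG with `P = Σ^N`. -/
def CPCUBG (T : Set (Word k → A)) : Prop :=
  ∃ N : ℕ, CPCBGWith T {z : Word k | z.length = N}

/-- `T` is CPC-irreducible (CPC IR). -/
def CPCIR (T : Set (Word k → A)) : Prop :=
  ∀ (n m : ℕ) (u v : Word k → A),
    AdmissibleBlock T n u → AdmissibleBlock T m v →
    ∃ P : Set (Word k), IsCPC P ∧ (∀ z ∈ P, n + 1 ≤ z.length) ∧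
      ∃ t ∈ T, (∀ z : Word k, z.length ≤ n → t z = u z) ∧
        ∀ w ∈ P, ∀ y : Word k, y.length ≤ m → t (w ++ y) = v y

/-- The finite word `u` is admissible in the one-sided shift space `X`. -/
def WordAdmissible (X : Set (ℕ → A)) (u : List A) : Prop :=
  ∃ x ∈ X, ∃ i : ℕ, OccursAt x i u

/-- The one-sided shift space `X` is topologically mixing. -/
def MixingShift (X : Set (ℕ → A)) : Prop :=
  ∀ u v : List A, WordAdmissible X u → WordAdmissible X v →
    ∃ N : ℕ, ∀ n ≥ N, ∃ x ∈ X, OccursAt x 0 u ∧ OccursAt x (u.length + n) v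

/-- The one-sided shift space `X` is transitive (irreducible). -/
def TransitiveShift (X : Set (ℕ → A)) : Prop :=
  ∀ u v : List A, WordAdmissible X u → WordAdmissible X v →
    ∃ x ∈ X, ∃ n : ℕ, u.length ≤ n ∧ OccursAt x 0 u ∧ OccursAt x n v

end TreeShiftPaper

namespace TreeShiftPaper

/-- Shift invariance of one-sided shift spaces. -/
lemma shiftOf_shift_invariant {A : Type*} (F : Set (List A)) (x : ℕ → A)
    (hx : x ∈ shiftOf F) (i : ℕ) : (fun r => x (i + r)) ∈ shiftOf F := by
  intro w hw j hocc
  refine hx w hw (i + j) ?_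
  intro jj
  have := hocc jj
  simpa [Nat.add_assoc] using this

lemma chain_length {k : ℕ} {c : ℕ → Word k} (hc : IsChain c) (m : ℕ) :
    (c m).length = m := by
  induction m with
  | zero => simp [hc.1]
  | succ m ih =>
    obtain ⟨i, hi⟩ := hc.2 m
    simp [hi, ih]

/-- Level-constant trees lie in the hom tree-shift whenever the sequence lies in `X`. -/
lemma level_tree_mem {k : ℕ} {A : Type*} (X : Set (ℕ → A)) (y : ℕ → A) (hy : y ∈ X) :
    (fun w : Word k => y w.length) ∈ homTree k X := by
  intro c hc
  have : (fun n => y (c n).length) = y := by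
    funext n; rw [chain_length hc]
  simpa [this] using hy

end TreeShiftPaper

namespace TreeShiftPaper

/-- If the hom tree-shift `T_X` of a one-sided shift space `X` over a finite alphabet is
a tree-shift of finite type, then `X` is an SFT. -/
theorem stmt1 {k : ℕ} (hk : 2 ≤ k) {A : Type*} [Fintype A] (X : Set (ℕ → A))
    (hX : IsShift X) (hT : IsTreeSFT (homTree k X)) : IsSFT X := by
  obtain ⟨F₀, hX0⟩ := hX
  obtain ⟨F, hFfin, hFsupp, hTF⟩ := hT
  -- bound the depth of all forbidden supports
  have hfin : (⋃ p ∈ F, p.1).Finite := hFfin.biUnion (fun p hp => (hFsupp p hp).1)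
  obtain ⟨n, hn⟩ := (hfin.image List.length).bddAbove
  have hbound : ∀ p ∈ F, ∀ w ∈ p.1, w.length ≤ n := by
    intro p hp w hw
    exact hn ⟨w, Set.mem_biUnion hp hw, rfl⟩
  -- forbidden words for X
  set G : Set (List A) := {w | w.length = n + 1 ∧ ¬ WordAdmissible X w} with hG
  have hGfin : G.Finite := by
    refine (List.finite_length_eq A (n + 1)).subset ?_
    intro w hw; exact hw.1
  refine ⟨G, hGfin, ?_⟩
  apply Set.eq_of_subset_of_subset
  · intro x hx w hw i hocc
    exact hw.2 ⟨x, hx, i, hocc⟩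
  · intro x hx
    -- the level-constant tree determined by x
    set t : Word k → A := fun w => x w.length with ht
    have htmem : t ∈ treeShiftOf F := by
      intro p hp hap
      obtain ⟨s, hs⟩ := hap
      -- the window of x at s.length of length n+1 is admissible
      set W : List A := (List.range (n + 1)).map (fun r => x (s.length + r)) with hW
      have hWlen : W.length = n + 1 := by simp [hW]
      have hWocc : OccursAt x s.length W := by
        intro j
        have hj : (j : ℕ) < n + 1 := by
          have := j.isLt; omega
        simp [hW, List.get_eq_getElem]
      have hWadm : WordAdmissible X W := by
        by_contra hc
        exact hx W ⟨hWlen, hc⟩ s.length hWocc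
      obtain ⟨y, hy, i, hyocc⟩ := hWadm
      -- shift y to align the window at the origin
      set y' : ℕ → A := fun r => y (i + r) with hy'
      have hy'X : y' ∈ X := by
        rw [hX0] at hy ⊢
        exact shiftOf_shift_invariant F₀ y hy i
      have hy'eq : ∀ r ≤ n, y' r = x (s.length + r) := by
        intro r hr
        have hrlt : r < W.length := by omega
        have := hyocc ⟨r, hrlt⟩
        simpa [hy', hW, List.get_eq_getElem] using this
      -- the level-constant tree of y' contains the forbidden pattern p
      have ht' : (fun w : Word k => y' w.length) ∈ homTree k X :=
        level_tree_mem X y' hy'X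
      rw [hTF] at ht'
      refine ht' p hp ⟨[], ?_⟩
      intro w hw
      have hwl : w.length ≤ n := hbound p hp w hw
      calc y' ([] ++ w).length = x (s.length + w.length) := by
            simpa using hy'eq w.length hwl
        _ = t (s ++ w) := by simp [ht]
        _ = p.2 w := hs w hw
    rw [← hTF] at htmem
    -- project along the leftmost chain
    have hk0 : 0 < k := by omega
    set c : ℕ → Word k := fun m => List.replicate m (⟨0, hk0⟩ : Fin k) with hc
    have hchain : IsChain c := by
      constructor
      · simp [hc]
      · intro m
        exact ⟨⟨0, hk0⟩, by simp [hc, List.replicate_succ']⟩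
    have := htmem c hchain
    have heq : (fun m => t (c m)) = x := by
      funext m; simp [ht, hc]
    rwa [heq] at this

end TreeShiftPaper
end

section
/- Every CPC-block gluing tree-shift is topologically mixing: if T is CPC BG, then T is TM. -/
/-!
Any block can be planted below any node `r`: gluing a tree below `[c] ++ z` with
`z = c ^ j ∈ P` and shifting by `c ^ j` moves it one letter down, since `c :: c ^ j = c ^ j ++ [c]`.
Given `H₁ ⊆ Δ_n` and a far-away node `w` with `|w| ≥ n + L` (`L` bounding the lengths in `P`),
write `w = w' ++ z ++ r` with `|w'| = n` and `z ∈ P`; block gluing of the `n`-block of `t₁`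
with the `t₂`-block planted below `r` then gives the mixing tree.
-/

namespace TreeShiftPaper

section

variable {k : ℕ} {A : Type*}

lemma IsTreeShift.shift_mem {T : Set (Word k → A)} (hT : IsTreeShift T) {t : Word k → A}
    (ht : t ∈ T) (q : Word k) : (fun y => t (q ++ y)) ∈ T := by
  obtain ⟨F, -, rfl⟩ := hT
  rintro p hp ⟨s, hs⟩
  exact ht p hp ⟨q ++ s, fun w hw => by rw [List.append_assoc]; exact hs w hw⟩

lemma admissibleBlock_of_mem {T : Set (Word k → A)} {t : Word k → A} (ht : t ∈ T) (n : ℕ) :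
    AdmissibleBlock T n t :=
  ⟨t, ht, [], fun _ _ => rfl⟩

lemma wordDist_le_length_add_length (x y : Word k) : wordDist x y ≤ x.length + y.length :=
  Nat.sub_le _ _

lemma _root_.Set.Finite.exists_length_le {α : Type*} {S : Set (List α)} (hS : S.Finite) :
    ∃ L, ∀ z ∈ S, z.length ≤ L := by
  obtain ⟨L, hL⟩ := (hS.image List.length).bddAbove
  exact ⟨L, fun z hz => hL (Set.mem_image_of_mem _ hz)⟩

lemma eq_replicate_of_prefix_replicate {α : Type*} {z : List α} {L : ℕ} {c : α}
    (h : z <+: List.replicate L c) : z = List.replicate z.length c :=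
  List.eq_replicate_iff.2 ⟨rfl, fun _ hb => List.eq_of_mem_replicate (h.subset hb)⟩

lemma IsCPC.finite {P : Set (Word k)} (hP : IsCPC P) : P.Finite :=
  hP.1

lemma IsCPC.exists_prefix_of_length_le {P : Set (Word k)} (hP : IsCPC P) {L : ℕ}
    (hL : ∀ z ∈ P, z.length ≤ L) {w : Word k} (hw : L ≤ w.length) : ∃ z ∈ P, z <+: w :=
  hP.2.2 w fun z hz => (hL z hz).trans hw

namespace CPCBGWith

variable {T : Set (Word k → A)} {P : Set (Word k)}

lemma exists_glue (hBG : CPCBGWith T P) {t₁ t₂ : Word k → A} (ht₁ : t₁ ∈ T) (ht₂ : t₂ ∈ T)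
    (n m : ℕ) :
    ∃ t ∈ T, (∀ z : Word k, z.length ≤ n → t z = t₁ z) ∧
      ∀ w : Word k, w.length = n → ∀ z ∈ P, ∀ y : Word k, y.length ≤ m →
        t (w ++ z ++ y) = t₂ y :=
  hBG n m t₁ t₂ (admissibleBlock_of_mem ht₁ n) (admissibleBlock_of_mem ht₂ m)

lemma exists_planted (hBG : CPCBGWith T P) (hT : IsTreeShift T) (hP : IsCPC P)
    {t₂ : Word k → A} (ht₂ : t₂ ∈ T) (m : ℕ) (r : Word k) :
    ∃ t ∈ T, ∀ y : Word k, y.length ≤ m → t (r ++ y) = t₂ y := by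
  obtain ⟨L, hL⟩ := hP.finite.exists_length_le
  induction r with
  | nil => exact ⟨t₂, ht₂, fun _ _ => rfl⟩
  | cons c s ih =>
    obtain ⟨t', ht', ht'_eq⟩ := ih
    obtain ⟨z, hzP, hz⟩ :=
      hP.exists_prefix_of_length_le hL (w := List.replicate L c) (by simp)
    obtain ⟨t, ht, -, hglue⟩ := hBG.exists_glue ht₂ ht' 1 (s.length + m)
    refine ⟨fun y => t (z ++ y), hT.shift_mem ht z, fun y hy => ?_⟩
    have hshift : z ++ (c :: (s ++ y)) = [c] ++ z ++ (s ++ y) := by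
      rw [eq_replicate_of_prefix_replicate hz, ← List.singleton_append, ← List.append_assoc,
        ← List.replicate_succ', List.replicate_succ]
      rfl
    change t (z ++ (c :: s ++ y)) = t₂ y
    rw [List.cons_append, hshift, hglue [c] rfl z hzP (s ++ y) (by simp [hy]), ht'_eq y hy]

lemma exists_glue_of_le_length (hBG : CPCBGWith T P) (hT : IsTreeShift T) (hP : IsCPC P)
    {L : ℕ} (hL : ∀ z ∈ P, z.length ≤ L) {t₁ t₂ : Word k → A} (ht₁ : t₁ ∈ T) (ht₂ : t₂ ∈ T)
    {n : ℕ} (m : ℕ) {w : Word k} (hw : n + L ≤ w.length) :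
    ∃ t ∈ T, (∀ z : Word k, z.length ≤ n → t z = t₁ z) ∧
      ∀ y : Word k, y.length ≤ m → t (w ++ y) = t₂ y := by
  obtain ⟨z, hzP, r, hr⟩ :=
    hP.exists_prefix_of_length_le hL (w := w.drop n) (by rw [List.length_drop]; omega)
  obtain ⟨t₃, ht₃, ht₃_eq⟩ := hBG.exists_planted hT hP ht₂ m r
  obtain ⟨t, ht, hleft, hglue⟩ := hBG.exists_glue ht₁ ht₃ n (r.length + m)
  refine ⟨t, ht, hleft, fun y hy => ?_⟩
  have hsplit : w ++ y = w.take n ++ z ++ (r ++ y) := by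
    conv_lhs => rw [← List.take_append_drop n w, ← hr]
    simp
  rw [hsplit, hglue _ (by rw [List.length_take]; omega) z hzP _ (by simp [hy]), ht₃_eq y hy]

end CPCBGWith

end

theorem stmt7_general {k : ℕ} {A : Type*} (T : Set (Word k → A))
    (hT : IsTreeShift T) (h : CPCBG T) : TM T := by
  obtain ⟨P, hP, hBG⟩ := h
  obtain ⟨L, hL⟩ := hP.finite.exists_length_le
  intro H₁ H₂ hH₁ hH₂
  obtain ⟨n, hn⟩ := hH₁.exists_length_le
  obtain ⟨m, hm⟩ := hH₂.exists_length_le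
  refine ⟨2 * n + L, fun t₁ ht₁ t₂ ht₂ w hw => ?_⟩
  rcases H₁.eq_empty_or_nonempty with rfl | ⟨h₀, hh₀⟩
  · obtain ⟨t, ht, ht_eq⟩ := hBG.exists_planted hT hP ht₂ m w
    exact ⟨t, ht, by simp, fun y hy => ht_eq y (hm y hy)⟩
  · have hw_len : n + L ≤ w.length := by
      have hdist := (hw h₀ hh₀).trans (wordDist_le_length_add_length w h₀)
      have hh₀_len := hn h₀ hh₀
      omega
    obtain ⟨t, ht, hleft, hright⟩ := hBG.exists_glue_of_le_length hT hP hL ht₁ ht₂ m hw_len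
    exact ⟨t, ht, fun z hz => hleft z (hn z hz), fun y hy => hright y (hm y hy)⟩

/-- Every CPC-block gluing tree-shift is topologically mixing. -/
theorem stmt7 {k : ℕ} (hk : 2 ≤ k) {A : Type*} [Fintype A] (T : Set (Word k → A))
    (hT : IsTreeShift T) (h : CPCBG T) : TM T :=
  stmt7_general T hT h

end TreeShiftPaper
end

section
/- Every block gluing tree-shift is topologically mixing: if T is BG, then T is TM. -/
namespace TreeShiftPaper

/-- Tree-shifts are shift-invariant. -/
lemma shift_mem_treeShiftOf {k : ℕ} {A : Type*} {F : Set ((Set (Word k)) × (Word k → A))}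
    {t : Word k → A} (ht : t ∈ treeShiftOf F) (s : Word k) :
    (fun x => t (s ++ x)) ∈ treeShiftOf F := by
  intro p hp hpat
  obtain ⟨s', hs'⟩ := hpat
  exact ht p hp ⟨s ++ s', fun w hw => by simpa [List.append_assoc] using hs' w hw⟩

/-- Every block gluing tree-shift is topologically mixing. -/
theorem stmt8 {k : ℕ} (hk : 2 ≤ k) {A : Type*} [Fintype A] (T : Set (Word k → A))
    (hT : IsTreeShift T) (h : BG T) : TM T := by
  obtain ⟨F, -, rfl⟩ := hT
  obtain ⟨N₀, hN₀⟩ := h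
  intro H₁ H₂ hH₁ hH₂
  set n := hH₁.toFinset.sup List.length with hn
  set m := hH₂.toFinset.sup List.length with hm
  refine ⟨N₀ + 2 * n + 1, ?_⟩
  intro t₁ ht₁ t₂ ht₂ w hw
  have hu : AdmissibleBlock (treeShiftOf F) n t₁ :=
    ⟨t₁, ht₁, [], fun z _ => by simp⟩
  have hv : AdmissibleBlock (treeShiftOf F) m t₂ :=
    ⟨t₂, ht₂, [], fun z _ => by simp⟩
  by_cases hne : H₁.Nonempty
  · obtain ⟨h₀, hh₀⟩ := hne
    have hlen : N₀ + n ≤ w.length := by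
      have h1 := hw h₀ hh₀
      have h2 : wordDist w h₀ ≤ w.length + h₀.length := Nat.sub_le _ _
      have h3 : h₀.length ≤ n := Finset.le_sup (hH₁.mem_toFinset.mpr hh₀)
      omega
    obtain ⟨t, htT, h1, h2⟩ := hN₀ n m t₁ t₂ hu hv w hlen
    exact ⟨t, htT, fun z hz => h1 z (Finset.le_sup (hH₁.mem_toFinset.mpr hz)),
      fun z hz => h2 z (Finset.le_sup (hH₂.mem_toFinset.mpr hz))⟩
  · have hk0 : 0 < k := by omega
    set pad : Word k := List.replicate N₀ ⟨0, hk0⟩ with hpad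
    have hu0 : AdmissibleBlock (treeShiftOf F) 0 t₁ :=
      ⟨t₁, ht₁, [], fun z _ => by simp⟩
    have hlen : N₀ + 0 ≤ (pad ++ w).length := by simp [hpad]
    obtain ⟨t, htT, h1, h2⟩ := hN₀ 0 m t₁ t₂ hu0 hv (pad ++ w) hlen
    refine ⟨fun x => t (pad ++ x), shift_mem_treeShiftOf htT pad,
      fun z hz => absurd ⟨z, hz⟩ hne, fun z hz => ?_⟩
    have := h2 z (Finset.le_sup (hH₂.mem_toFinset.mpr hz))
    simpa [List.append_assoc] using this

end TreeShiftPaper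
end
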